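/- For every real number α > 0 there exists a constant C_α > 0 such that for every real x > 0 one has ∑_{n=3}^∞ (2^n / log n)^α · 1{2^n ≤ x^{1/α} · log n} ≤ C_α · x, where log denotes the natural logarithm and the indicator selects those n ≥ 3 for which 2^n ≤ x^{1/α} log n. -/
import Mathlib


open Real

private noncomputable def bb (α : ℝ) (n : ℕ) : ℝ := ((2 : ℝ) ^ n / Real.log n) ^ α

private lemma bb_def (α : ℝ) (n : ℕ) : ((2 : ℝ) ^ n / Real.log n) ^ α = bb α n := rfl

private lemma log_nat_gt {n : ℕ} (hn : 3 ≤ n) : 1 < Real.log n := by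
  have h3 : 1 < Real.log 3 := by
    rw [Real.lt_log_iff_exp_lt (by norm_num : (0:ℝ) < 3)]
    exact Real.exp_one_lt_d9.trans (by norm_num)
  have hcast : (3:ℝ) ≤ (n:ℝ) := by exact_mod_cast hn
  exact h3.trans_le (Real.log_le_log (by norm_num) hcast)

private lemma bb_pos (α : ℝ) {n : ℕ} (hn : 3 ≤ n) : 0 < bb α n := by
  have hL : 1 < Real.log n := log_nat_gt hn
  have : (0:ℝ) < (2:ℝ) ^ n / Real.log n := by positivity
  exact Real.rpow_pos_of_pos this α

/-- geometric growth of `bb`. -/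
private lemma bb_grow {α : ℝ} (hα : 0 < α) :
    ∃ r : ℝ, 1 < r ∧ ∀ m : ℕ, 3 ≤ m → ∀ k : ℕ, r ^ k * bb α m ≤ bb α (m + k) := by
  have h2 : (0:ℝ) < Real.log 2 := Real.log_pos (by norm_num)
  have h3 : 1 < Real.log 3 := by
    rw [Real.lt_log_iff_exp_lt (by norm_num : (0:ℝ) < 3)]
    exact Real.exp_one_lt_d9.trans (by norm_num)
  have h23 : Real.log 2 < Real.log 3 := Real.log_lt_log (by norm_num) (by norm_num)
  set ρ : ℝ := 2 * Real.log 3 / (Real.log 3 + Real.log 2) with hρdef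
  have hρ1 : 1 < ρ := by
    rw [hρdef, lt_div_iff₀ (by linarith)]
    linarith
  have hρ0 : 0 < ρ := one_pos.trans hρ1
  refine ⟨ρ ^ α, (Real.one_lt_rpow_iff_of_pos hρ0).mpr (Or.inl ⟨hρ1, hα⟩), ?_⟩
  have hgrow : ∀ n : ℕ, 3 ≤ n → ρ ^ α * bb α n ≤ bb α (n + 1) := by
    intro n hn
    have hLn : 1 < Real.log n := log_nat_gt hn
    have hLn1 : 1 < Real.log ((n:ℕ) + 1 : ℕ) := log_nat_gt (by omega)
    have hLn1' : 1 < Real.log ((n:ℝ) + 1) := by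
      have : ((n:ℕ) + 1 : ℕ) = ((n:ℝ) + 1) := by push_cast; ring
      rwa [this] at hLn1
    have hn3 : (3:ℝ) ≤ (n:ℝ) := by exact_mod_cast hn
    have hLn3 : Real.log 3 ≤ Real.log n := Real.log_le_log (by norm_num) hn3
    -- log (n+1) ≤ log n + log 2
    have hsum : Real.log ((n:ℝ) + 1) ≤ Real.log n + Real.log 2 := by
      rw [← Real.log_mul (by positivity) (by norm_num)]
      exact Real.log_le_log (by linarith) (by nlinarith)
    have key : ρ * ((2:ℝ) ^ n / Real.log n) ≤ (2:ℝ) ^ (n + 1) / Real.log ((n:ℝ) + 1) := by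
      rw [← mul_div_assoc, div_le_div_iff₀ (by linarith) (by linarith)]
      have h2n : (0:ℝ) < 2 ^ n := by positivity
      have hρle : ρ * (Real.log n + Real.log 2) ≤ 2 * Real.log n := by
        rw [hρdef, div_mul_eq_mul_div, div_le_iff₀ (by linarith)]
        nlinarith
      have hstep : ρ * Real.log ((n:ℝ) + 1) ≤ 2 * Real.log n := by
        have := mul_le_mul_of_nonneg_left hsum hρ0.le
        linarith
      calc ρ * (2:ℝ) ^ n * Real.log ((n:ℝ) + 1) = 2 ^ n * (ρ * Real.log ((n:ℝ) + 1)) := by ring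
        _ ≤ 2 ^ n * (2 * Real.log n) := by nlinarith
        _ = 2 ^ (n + 1) * Real.log n := by ring
    have heq : ρ ^ α * bb α n = (ρ * ((2:ℝ) ^ n / Real.log n)) ^ α := by
      rw [bb, ← Real.mul_rpow hρ0.le (by positivity)]
    rw [heq, bb]
    have hcast : Real.log ((n + 1 : ℕ) : ℝ) = Real.log ((n:ℝ) + 1) := by push_cast; ring_nf
    rw [hcast]
    exact Real.rpow_le_rpow (by positivity) key hα.le
  intro m hm k
  induction k with
  | zero => simp
  | succ k ih =>
    have hr0 : (0:ℝ) < ρ ^ α := Real.rpow_pos_of_pos hρ0 α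
    have h1 : (ρ ^ α) ^ (k + 1) * bb α m = ρ ^ α * ((ρ ^ α) ^ k * bb α m) := by ring
    rw [h1, show m + (k + 1) = (m + k) + 1 by omega]
    calc ρ ^ α * ((ρ ^ α) ^ k * bb α m) ≤ ρ ^ α * bb α (m + k) :=
          mul_le_mul_of_nonneg_left ih hr0.le
      _ ≤ bb α ((m + k) + 1) := hgrow (m + k) (by omega)

private lemma bb_le {α : ℝ} (hα : 0 < α) {x : ℝ} (hx : 0 < x) {n : ℕ} (hn : 3 ≤ n)
    (h : (2:ℝ) ^ n ≤ x ^ (1 / α) * Real.log n) : bb α n ≤ x := by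
  have hLn : 1 < Real.log n := log_nat_gt hn
  have hdiv : (2:ℝ) ^ n / Real.log n ≤ x ^ (1 / α) := by
    rw [div_le_iff₀ (by linarith)]; exact h
  calc bb α n ≤ (x ^ (1 / α)) ^ α := Real.rpow_le_rpow (by positivity) hdiv hα.le
    _ = x := by
      rw [← Real.rpow_mul hx.le, one_div_mul_cancel hα.ne', Real.rpow_one]

/-- For every `α > 0` there exists a constant `C_α > 0` such that for every `x > 0` one has
`∑_{n=3}^∞ (2^n / log n)^α · 1{2^n ≤ x^{1/α} log n} ≤ C_α · x`. -/
theorem stmt_0 (α : ℝ) (hα : 0 < α) :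
    ∃ C : ℝ, 0 < C ∧ ∀ x : ℝ, 0 < x →
      (∑' n : ℕ,
        (if 3 ≤ n ∧ (2 : ℝ) ^ n ≤ x ^ (1 / α) * Real.log n
          then ((2 : ℝ) ^ n / Real.log n) ^ α else 0)) ≤ C * x := by
  obtain ⟨r, hr1, hiter⟩ := bb_grow hα
  have hr0 : (0:ℝ) < r := one_pos.trans hr1
  have hrinv : r⁻¹ < 1 := inv_lt_one_of_one_lt₀ hr1
  have hrinv0 : (0:ℝ) ≤ r⁻¹ := inv_nonneg.mpr hr0.le
  have hC0 : 0 < (1 - r⁻¹)⁻¹ := by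
    have : 0 < 1 - r⁻¹ := by linarith
    positivity
  refine ⟨(1 - r⁻¹)⁻¹, hC0, ?_⟩
  intro x hx
  set p : ℕ → Prop := fun n => 3 ≤ n ∧ (2 : ℝ) ^ n ≤ x ^ (1 / α) * Real.log n with hp
  apply tsum_le_of_sum_le'
  · exact mul_nonneg hC0.le hx.le
  intro s
  simp only [bb_def]
  -- the set of n with p n is bounded
  obtain ⟨k, hk⟩ := pow_unbounded_of_one_lt (x / bb α 3) hr1
  have hbound : ∀ n : ℕ, p n → n < 3 + k := by
    intro n hn
    by_contra hcon
    push_neg at hcon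
    have hn3 : 3 ≤ n := hn.1
    have hle : bb α n ≤ x := bb_le hα hx hn3 hn.2
    have h1 : r ^ (n - 3) * bb α 3 ≤ bb α n := by
      have := hiter 3 (le_refl 3) (n - 3)
      rwa [show 3 + (n - 3) = n by omega] at this
    have hkle : r ^ k ≤ r ^ (n - 3) := pow_le_pow_right₀ hr1.le (by omega)
    have hb3 : 0 < bb α 3 := bb_pos α (le_refl 3)
    have : x < r ^ k * bb α 3 := by
      rw [div_lt_iff₀ hb3] at hk
      exact hk
    nlinarith
  set T : Finset ℕ := (Finset.range (3 + k)).filter p with hT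
  set t : Finset ℕ := s.filter p with ht
  have hsum_eq : (∑ n ∈ s, if p n then bb α n else 0) = ∑ n ∈ t, bb α n :=
    (Finset.sum_filter p (bb α)).symm
  rw [hsum_eq]
  by_cases htne : t.Nonempty
  · have hTne : T.Nonempty := by
      obtain ⟨m, hm⟩ := htne
      have hpm : p m := (Finset.mem_filter.mp hm).2
      exact ⟨m, Finset.mem_filter.mpr ⟨Finset.mem_range.mpr (hbound m hpm), hpm⟩⟩
    set N : ℕ := T.max' hTne with hN
    have hpN : p N := (Finset.mem_filter.mp (T.max'_mem hTne)).2
    have hN3 : 3 ≤ N := hpN.1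
    have hNx : bb α N ≤ x := bb_le hα hx hN3 hpN.2
    have hle : ∀ n ∈ t, n ≤ N := by
      intro n hn
      have hpn : p n := (Finset.mem_filter.mp hn).2
      exact T.le_max' n (Finset.mem_filter.mpr ⟨Finset.mem_range.mpr (hbound n hpn), hpn⟩)
    have hterm : ∀ n ∈ t, bb α n ≤ x * (r⁻¹) ^ (N - n) := by
      intro n hn
      have hpn : p n := (Finset.mem_filter.mp hn).2
      have hnN : n ≤ N := hle n hn
      have h1 : r ^ (N - n) * bb α n ≤ bb α N := by
        have := hiter n hpn.1 (N - n)
        rwa [show n + (N - n) = N by omega] at this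
      have h2 : r ^ (N - n) * bb α n ≤ x := h1.trans hNx
      have hpow : (0:ℝ) < r ^ (N - n) := pow_pos hr0 _
      rw [inv_pow, ← div_eq_mul_inv, le_div_iff₀ hpow]
      linarith [h2]
    calc (∑ n ∈ t, bb α n) ≤ ∑ n ∈ t, x * (r⁻¹) ^ (N - n) := Finset.sum_le_sum hterm
      _ = x * ∑ n ∈ t, (r⁻¹) ^ (N - n) := by rw [Finset.mul_sum]
      _ ≤ x * (1 - r⁻¹)⁻¹ := by
          apply mul_le_mul_of_nonneg_left _ hx.le
          have hinj : ∀ a ∈ t, ∀ b ∈ t, N - a = N - b → a = b := by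
            intro a ha b hb hab
            have := hle a ha
            have := hle b hb
            omega
          have himg : (∑ m ∈ t.image (fun n => N - n), (r⁻¹) ^ m)
              = ∑ n ∈ t, (r⁻¹) ^ (N - n) := Finset.sum_image hinj
          rw [← himg]
          have hsub : t.image (fun n => N - n) ⊆ Finset.range (N + 1) := by
            intro m hm
            obtain ⟨n, _, rfl⟩ := Finset.mem_image.mp hm
            exact Finset.mem_range.mpr (by omega)
          calc (∑ m ∈ t.image (fun n => N - n), (r⁻¹) ^ m)
              ≤ ∑ m ∈ Finset.range (N + 1), (r⁻¹) ^ m :=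
                Finset.sum_le_sum_of_subset_of_nonneg hsub
                  (fun i _ _ => pow_nonneg hrinv0 i)
            _ ≤ ∑' m : ℕ, (r⁻¹) ^ m :=
                Summable.sum_le_tsum _ (fun i _ => pow_nonneg hrinv0 i)
                  (summable_geometric_of_lt_one hrinv0 hrinv)
            _ = (1 - r⁻¹)⁻¹ := tsum_geometric_of_lt_one hrinv0 hrinv
      _ = (1 - r⁻¹)⁻¹ * x := mul_comm _ _
  · rw [Finset.not_nonempty_iff_eq_empty.mp htne, Finset.sum_empty]
    exact mul_nonneg hC0.le hx.le
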